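/- Let A be a unital C*-algebra and let p, q be projections in A with ‖p − q‖ < 1. Then p and q are unitarily equivalent, i.e., there exists a unitary u ∈ A with u*pu = q. -/

import Mathlib

/-!
With `w = p q + (1 - p)(1 - q)` one has `p w = w q` and
`w⋆ w = w w⋆ = 1 - (p - q)²`, which is invertible because `‖p - q‖ < 1`.
The unitary factor `u = w (w⋆ w)^(-1/2)` of the polar decomposition of `w` still
intertwines `p` and `q`, since `q` commutes with `w⋆ w`; hence `u⋆ p u = q`.
-/

section Intertwiner

variable {R : Type*} [Ring R] {p q : R}

def projIntertwiner (p q : R) : R := p * q + (1 - p) * (1 - q)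

lemma IsIdempotentElem.mul_projIntertwiner (hp : IsIdempotentElem p)
    (hq : IsIdempotentElem q) : p * projIntertwiner p q = projIntertwiner p q * q := by
  have hp' : p * (1 - p) = 0 := by rw [mul_sub, mul_one, hp.eq, sub_self]
  have hq' : (1 - q) * q = 0 := by rw [sub_mul, one_mul, hq.eq, sub_self]
  simp only [projIntertwiner, mul_add, add_mul, ← mul_assoc, hp.eq, hp', zero_mul]
  simp only [mul_assoc, hq.eq, hq', mul_zero, add_zero]

variable [StarRing R]

lemma IsStarProjection.star_projIntertwiner (hp : IsStarProjection p)
    (hq : IsStarProjection q) : star (projIntertwiner p q) = projIntertwiner q p := by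
  simp [projIntertwiner, star_sub, hp.isSelfAdjoint.star_eq, hq.isSelfAdjoint.star_eq]

lemma IsStarProjection.projIntertwiner_mul_projIntertwiner (hp : IsStarProjection p)
    (hq : IsStarProjection q) :
    projIntertwiner p q * projIntertwiner q p = 1 - (p - q) ^ 2 := by
  have hp2 := hp.isIdempotentElem.eq
  have hq2 := hq.isIdempotentElem.eq
  simp only [projIntertwiner, sq]
  noncomm_ring
  simp only [hp2, hq2, ← mul_assoc q q]
  abel

lemma IsStarProjection.isStarNormal_projIntertwiner (hp : IsStarProjection p)
    (hq : IsStarProjection q) : IsStarNormal (projIntertwiner p q) := by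
  refine ⟨?_⟩
  rw [commute_iff_eq, hp.star_projIntertwiner hq, hq.projIntertwiner_mul_projIntertwiner hp,
    hp.projIntertwiner_mul_projIntertwiner hq, ← neg_sub p q, neg_sq]

end Intertwiner

lemma commute_star_mul_self_of_mul_eq_mul {R : Type*} [Semigroup R] [StarMul R] {p q w : R}
    (hp : IsSelfAdjoint p) (hq : IsSelfAdjoint q) (h : p * w = w * q) :
    Commute q (star w * w) := by
  have h' : q * star w = star w * p := by
    simpa [hp.star_eq, hq.star_eq] using (congrArg star h).symm
  rw [commute_iff_eq, ← mul_assoc, h', mul_assoc, h, ← mul_assoc]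

section PolarFactor

variable {A : Type*} [CStarAlgebra A] [PartialOrder A] [StarOrderedRing A]

noncomputable def polarFactor (w : A) : A := w * (star w * w) ^ (-(1 / 2) : ℝ)

lemma polarFactor_mem_unitary {w : A} [IsStarNormal w] (hw : IsUnit (star w * w)) :
    polarFactor w ∈ unitary A := by
  set a := star w * w
  set s := a ^ (-(1 / 2) : ℝ)
  have hs : IsSelfAdjoint s := CFC.rpow_nonneg.isSelfAdjoint
  have hssa : s * s * a = 1 := by
    rw [← CFC.rpow_one a (star_mul_self_nonneg w), ← CFC.rpow_add hw, ← CFC.rpow_add hw]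
    norm_num [CFC.rpow_zero a (star_mul_self_nonneg w)]
  have hwa : Commute w a := by
    rw [commute_iff_eq, ← mul_assoc, ← star_comm_self', mul_assoc]
  have hsa : Commute s a := (Commute.refl a).cfc_nnreal _
  have hws : Commute w s := (hwa.symm.cfc_nnreal _).symm
  rw [polarFactor, Unitary.mem_iff, star_mul, hs.star_eq]
  constructor
  · calc s * star w * (w * s) = s * a * s := by simp only [a, mul_assoc]
      _ = 1 := by rw [mul_assoc, ← hsa.eq, ← mul_assoc, hssa]
  · calc w * s * (s * star w) = s * s * (w * star w) := by
          rw [← mul_assoc, mul_assoc w, (hws.mul_right hws).eq, mul_assoc]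
      _ = 1 := by rw [← star_comm_self', hssa]

lemma mul_polarFactor_of_mul_eq_mul {p q w : A} (hp : IsSelfAdjoint p) (hq : IsSelfAdjoint q)
    (h : p * w = w * q) : p * polarFactor w = polarFactor w * q := by
  have hqs : Commute q ((star w * w) ^ (-(1 / 2) : ℝ)) :=
    ((commute_star_mul_self_of_mul_eq_mul hp hq h).symm.cfc_nnreal _).symm
  rw [polarFactor, ← mul_assoc, h, mul_assoc, hqs.eq, mul_assoc]

end PolarFactor

lemma star_mul_mul_eq_of_mul_eq_mul {R : Type*} [Monoid R] [StarMul R] {p q u : R}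
    (hu : u ∈ unitary R) (h : p * u = u * q) : star u * p * u = q := by
  rw [mul_assoc, h, ← mul_assoc, Unitary.star_mul_self_of_mem hu, one_mul]

/-- Two projections at distance less than 1 in a unital C*-algebra are
unitarily equivalent. -/
theorem projections_close_unitarily_equivalent
    {A : Type*} [CStarAlgebra A]
    (p q : A) (hp : p = star p ∧ p * p = p) (hq : q = star q ∧ q * q = q)
    (hpq : ‖p - q‖ < 1) :
    ∃ u : A, u ∈ unitary A ∧ star u * p * u = q := by
  let := CStarAlgebra.spectralOrder A
  let := CStarAlgebra.spectralOrderedRing A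
  have hP : IsStarProjection p := ⟨hp.2, hp.1.symm⟩
  have hQ : IsStarProjection q := ⟨hq.2, hq.1.symm⟩
  have := hP.isStarNormal_projIntertwiner hQ
  have hunit : IsUnit (star (projIntertwiner p q) * projIntertwiner p q) := by
    rw [hP.star_projIntertwiner hQ, hQ.projIntertwiner_mul_projIntertwiner hP, ← neg_sub p q,
      neg_sq]
    refine isUnit_one_sub_of_norm_lt_one ((norm_pow_le' _ two_pos).trans_lt ?_)
    exact pow_lt_one₀ (norm_nonneg _) hpq two_ne_zero
  have hintertwine := hP.isIdempotentElem.mul_projIntertwiner hQ.isIdempotentElem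
  have hu := polarFactor_mem_unitary hunit
  exact ⟨_, hu, star_mul_mul_eq_of_mul_eq_mul hu
    (mul_polarFactor_of_mul_eq_mul hP.isSelfAdjoint hQ.isSelfAdjoint hintertwine)⟩
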